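/- arXiv:2202.08312 — 8 statements merged into one kernel-verified Lean document; each statement's English description precedes it below -/
import Mathlib

section
/- Let n ≥ 1, let S be an invertible n×n real matrix, and let c > 0 be such that vᵀ(SᵀS)v ≥ c·‖v‖² for every v ∈ ℝⁿ. If X is an n×n real symmetric positive-definite matrix with all diagonal entries at most 1 and tr(SᵀS X⁻¹) ≤ tr(SᵀS), then vᵀXv ≥ (c / tr(SᵀS))·‖v‖² for every v ∈ ℝⁿ. In particular, every minimizer of X ↦ tr(SᵀS X⁻¹) over positive-definite matrices with diagonal entries at most 1 has all eigenvalues at least c / tr(SᵀS). -/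
/-!
From `c • 1 ≤ SᵀS` and the monotonicity of `B ↦ tr (A B)` for positive semidefinite `A`,
`c · tr X⁻¹ ≤ tr (SᵀS X⁻¹) ≤ tr (SᵀS)`. Since `X⁻¹ ≤ (tr X⁻¹) • 1` (again by that monotonicity,
applied to `v vᵀ ≤ ‖v‖² • 1`), the Cauchy–Schwarz inequality `‖v‖⁴ ≤ (vᵀXv)(vᵀX⁻¹v)` gives
`‖v‖² ≤ tr X⁻¹ · vᵀXv ≤ (tr (SᵀS) / c) · vᵀXv`.
-/

open Matrix

open scoped MatrixOrder ComplexOrder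

namespace Matrix

variable {n : Type*} [Fintype n]

theorem PosSemidef.trace_mul_nonneg {𝕜 : Type*} [RCLike 𝕜] {A B : Matrix n n 𝕜}
    (hA : A.PosSemidef) (hB : B.PosSemidef) : 0 ≤ (A * B).trace := by
  classical
  obtain ⟨C, rfl⟩ := CStarAlgebra.nonneg_iff_eq_star_mul_self.mp hA.nonneg
  rw [Matrix.mul_assoc, trace_mul_comm, star_eq_conjTranspose]
  exact (hB.mul_mul_conjTranspose_same C).trace_nonneg

theorem PosSemidef.trace_mul_le_trace_mul {𝕜 : Type*} [RCLike 𝕜] {A B C : Matrix n n 𝕜}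
    (hA : A.PosSemidef) (hBC : B ≤ C) : (A * B).trace ≤ (A * C).trace := by
  simpa [Matrix.mul_sub, trace_sub] using hA.trace_mul_nonneg (le_iff.mp hBC)

theorem PosSemidef.dotProduct_mulVec_sq_le {A : Matrix n n ℝ} (hA : A.PosSemidef)
    (x y : n → ℝ) : (x ⬝ᵥ A *ᵥ y) ^ 2 ≤ (x ⬝ᵥ A *ᵥ x) * (y ⬝ᵥ A *ᵥ y) := by
  classical
  simpa only [toBilin'_apply'] using (toBilin' A).apply_sq_le_of_symm
    (fun x ↦ by simpa [toBilin'_apply'] using hA.dotProduct_mulVec_nonneg x)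
    (LinearMap.BilinForm.isSymm_iff.mp
      (isSymm_toBilin'_iff_isSymm.mpr (isHermitian_iff_isSymm.mp hA.isHermitian))) x y

variable [DecidableEq n]

theorem vecMulVec_self_le_smul_one (v : n → ℝ) : vecMulVec v v ≤ (v ⬝ᵥ v) • 1 := by
  have hvv : (vecMulVec v v).IsHermitian := isHermitian_iff_isSymm.mpr (transpose_vecMulVec v v)
  refine le_iff.mpr (PosSemidef.of_dotProduct_mulVec_nonneg
    ((isHermitian_one.smul (IsSelfAdjoint.all _)).sub hvv) fun x ↦ ?_)
  have h := PosSemidef.one.dotProduct_mulVec_sq_le v x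
  simp only [one_mulVec, star_trivial] at h ⊢
  simp only [sub_mulVec, dotProduct_sub, smul_mulVec, one_mulVec, dotProduct_smul, smul_eq_mul,
    vecMulVec_mulVec, op_smul_eq_mul]
  rw [dotProduct_comm x v, ← sq, sub_nonneg]
  exact h

theorem smul_one_le_of_forall_dotProduct {A : Matrix n n ℝ} (hA : A.IsHermitian) {c : ℝ}
    (h : ∀ v, c * (v ⬝ᵥ v) ≤ v ⬝ᵥ A *ᵥ v) : c • 1 ≤ A := by
  refine le_iff.mpr (PosSemidef.of_dotProduct_mulVec_nonneg
    (hA.sub (isHermitian_one.smul (IsSelfAdjoint.all c))) fun v ↦ ?_)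
  simpa [sub_mulVec, dotProduct_sub, smul_mulVec, dotProduct_smul] using h v

theorem PosSemidef.dotProduct_mulVec_le_trace_mul {A : Matrix n n ℝ} (hA : A.PosSemidef)
    (v : n → ℝ) : v ⬝ᵥ A *ᵥ v ≤ A.trace * (v ⬝ᵥ v) := by
  simpa [mul_vecMulVec, trace_vecMulVec, dotProduct_comm _ v, mul_comm] using
    hA.trace_mul_le_trace_mul (vecMulVec_self_le_smul_one v)

theorem PosDef.dotProduct_self_le_trace_inv_mul {X : Matrix n n ℝ} (hX : X.PosDef)
    (v : n → ℝ) : v ⬝ᵥ v ≤ X⁻¹.trace * (v ⬝ᵥ X *ᵥ v) := by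
  have hXX : X * X⁻¹ = 1 := mul_nonsing_inv X ((isUnit_iff_isUnit_det X).mp hX.isUnit)
  have hcs := hX.posSemidef.dotProduct_mulVec_sq_le v (X⁻¹ *ᵥ v)
  rw [mulVec_mulVec, hXX, one_mulVec, dotProduct_comm (X⁻¹ *ᵥ v)] at hcs
  have hinv := hX.inv.posSemidef.dotProduct_mulVec_le_trace_mul v
  have hq : 0 ≤ v ⬝ᵥ X *ᵥ v := by simpa using hX.posSemidef.dotProduct_mulVec_nonneg v
  have ht : 0 ≤ v ⬝ᵥ v := by simpa using dotProduct_star_self_nonneg v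
  rcases ht.eq_or_lt with ht0 | htpos
  · rw [← ht0]
    exact mul_nonneg hX.inv.posSemidef.trace_nonneg hq
  · refine le_of_mul_le_mul_right ?_ htpos
    calc v ⬝ᵥ v * v ⬝ᵥ v = (v ⬝ᵥ v) ^ 2 := (sq _).symm
      _ ≤ v ⬝ᵥ X *ᵥ v * v ⬝ᵥ X⁻¹ *ᵥ v := hcs
      _ ≤ v ⬝ᵥ X *ᵥ v * (X⁻¹.trace * v ⬝ᵥ v) := mul_le_mul_of_nonneg_left hinv hq
      _ = X⁻¹.trace * v ⬝ᵥ X *ᵥ v * v ⬝ᵥ v := by ring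

end Matrix

theorem minimizer_eigenvalue_lower_bound_general (n : ℕ)
    (S : Matrix (Fin n) (Fin n) ℝ)
    (c : ℝ) (hc : 0 < c)
    (hlb : ∀ v : Fin n → ℝ, c * (∑ i, (v i) ^ 2) ≤ v ⬝ᵥ ((Sᵀ * S) *ᵥ v))
    (X : Matrix (Fin n) (Fin n) ℝ) (hX : X.PosDef)
    (hloss : Matrix.trace (Sᵀ * S * X⁻¹) ≤ Matrix.trace (Sᵀ * S)) :
    ∀ v : Fin n → ℝ,
      (c / Matrix.trace (Sᵀ * S)) * (∑ i, (v i) ^ 2) ≤ v ⬝ᵥ (X *ᵥ v) := by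
  intro v
  have hsq (w : Fin n → ℝ) : ∑ i, w i ^ 2 = w ⬝ᵥ w := by simp only [dotProduct, sq]
  have hSS : (Sᵀ * S).PosSemidef := by simpa using posSemidef_conjTranspose_mul_self S
  have hA : c • 1 ≤ Sᵀ * S :=
    smul_one_le_of_forall_dotProduct hSS.isHermitian fun w ↦ by simpa only [hsq] using hlb w
  have hcX : c * X⁻¹.trace ≤ (Sᵀ * S).trace := by
    calc c * X⁻¹.trace = (X⁻¹ * c • 1).trace := by simp [trace_smul]
      _ ≤ (X⁻¹ * (Sᵀ * S)).trace := hX.inv.posSemidef.trace_mul_le_trace_mul hA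
      _ = (Sᵀ * S * X⁻¹).trace := trace_mul_comm _ _
      _ ≤ (Sᵀ * S).trace := hloss
  have hq : 0 ≤ v ⬝ᵥ X *ᵥ v := by simpa using hX.posSemidef.dotProduct_mulVec_nonneg v
  rw [hsq, div_mul_eq_mul_div]
  refine div_le_of_le_mul₀ hSS.trace_nonneg hq ?_
  calc c * v ⬝ᵥ v ≤ c * (X⁻¹.trace * v ⬝ᵥ X *ᵥ v) :=
        mul_le_mul_of_nonneg_left (hX.dotProduct_self_le_trace_inv_mul v) hc.le
    _ = c * X⁻¹.trace * v ⬝ᵥ X *ᵥ v := (mul_assoc _ _ _).symm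
    _ ≤ (Sᵀ * S).trace * v ⬝ᵥ X *ᵥ v := mul_le_mul_of_nonneg_right hcX hq
    _ = v ⬝ᵥ X *ᵥ v * (Sᵀ * S).trace := mul_comm _ _

/-- Lemma `compact_constraints`: if `vᵀ(SᵀS)v ≥ c‖v‖²` with `c > 0`, and `X` is
symmetric positive definite with diagonal entries at most `1` and
`tr(SᵀS X⁻¹) ≤ tr(SᵀS)`, then `vᵀXv ≥ (c / tr(SᵀS))·‖v‖²` for all `v`. -/
theorem minimizer_eigenvalue_lower_bound (n : ℕ) (hn : 1 ≤ n)
    (S : Matrix (Fin n) (Fin n) ℝ) (hS : IsUnit S.det)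
    (c : ℝ) (hc : 0 < c)
    (hlb : ∀ v : Fin n → ℝ, c * (∑ i, (v i) ^ 2) ≤ v ⬝ᵥ ((Sᵀ * S) *ᵥ v))
    (X : Matrix (Fin n) (Fin n) ℝ) (hX : X.PosDef)
    (hdiag : ∀ i : Fin n, X i i ≤ 1)
    (hloss : Matrix.trace (Sᵀ * S * X⁻¹) ≤ Matrix.trace (Sᵀ * S)) :
    ∀ v : Fin n → ℝ,
      (c / Matrix.trace (Sᵀ * S)) * (∑ i, (v i) ^ 2) ≤ v ⬝ᵥ (X *ᵥ v) :=
  minimizer_eigenvalue_lower_bound_general n S c hc hlb X hX hloss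
end

section
/- Let n ≥ 1 and let S be an invertible n×n real matrix. Then the function f(X) = tr(SᵀS X⁻¹) is strictly convex on the set of n×n real symmetric positive-definite matrices; i.e., this set is convex and for all positive-definite X ≠ Y and all t ∈ (0,1), tr(SᵀS (tX + (1−t)Y)⁻¹) < t·tr(SᵀS X⁻¹) + (1−t)·tr(SᵀS Y⁻¹). -/
/-!
For positive definite `X`, `v ⬝ X⁻¹ v = max_u (2 u ⬝ v - u ⬝ X u)`, the maximum being attained
exactly where `X u = v`. The maximised functions are affine in `X`, so the quadratic form of `X⁻¹`
is convex in `X`; taking `u = w` and `v = Z w` for `Z = t X + (1 - t) Y` and a `w` with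
`X w ≠ Z w` makes the inequality strict. Hence `(t X + (1 - t) Y)⁻¹ < t X⁻¹ + (1 - t) Y⁻¹` in the
Loewner order, and pairing with `Sᵀ S` keeps it strict because `tr (Sᵀ S M) = tr (S M Sᵀ)` and a
nonzero positive semidefinite matrix has positive trace.
-/

open Matrix

open scoped MatrixOrder

namespace Matrix

variable {ι : Type*}

lemma convex_setOf_posDef : Convex ℝ {X : Matrix ι ι ℝ | X.PosDef} := by
  intro X hX Y hY a b ha hb hab
  rcases ha.lt_or_eq with ha | rfl
  · exact (hX.smul ha).add_posSemidef (hY.posSemidef.smul hb)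
  · rw [zero_add] at hab
    subst hab
    exact PosDef.posSemidef_add (hX.posSemidef.smul le_rfl) (hY.smul one_pos)

section CommRing

variable [Fintype ι] {R : Type*} [CommRing R]

lemma IsSymm.dotProduct_inv_mulVec_sub_eq [DecidableEq ι] {X : Matrix ι ι R} (hXs : X.IsSymm)
    (hX : IsUnit X.det) (u v : ι → R) :
    v ⬝ᵥ X⁻¹ *ᵥ v - (2 * (u ⬝ᵥ v) - u ⬝ᵥ X *ᵥ u) =
      (X *ᵥ u - v) ⬝ᵥ X⁻¹ *ᵥ (X *ᵥ u - v) := by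
  have hXu : X⁻¹ *ᵥ (X *ᵥ u) = u := by rw [mulVec_mulVec, nonsing_inv_mul _ hX, one_mulVec]
  have hXv : X *ᵥ (X⁻¹ *ᵥ v) = v := by rw [mulVec_mulVec, mul_nonsing_inv _ hX, one_mulVec]
  have hsymm (w : ι → R) : (X *ᵥ u) ⬝ᵥ w = u ⬝ᵥ X *ᵥ w := by
    rw [dotProduct_mulVec, ← vecMul_transpose, hXs.eq]
  rw [mulVec_sub, dotProduct_sub, sub_dotProduct, sub_dotProduct, hXu, hsymm, hsymm, hXv,
    dotProduct_comm v u]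
  ring

lemma dotProduct_smul_add_smul_mulVec (A B : Matrix ι ι R) (a b : R) (v : ι → R) :
    v ⬝ᵥ (a • A + b • B) *ᵥ v = a * (v ⬝ᵥ A *ᵥ v) + b * (v ⬝ᵥ B *ᵥ v) := by
  rw [add_mulVec, smul_mulVec, smul_mulVec, dotProduct_add, dotProduct_smul, dotProduct_smul,
    smul_eq_mul, smul_eq_mul]

/-- Both sides equal `2 w ⬝ v - w ⬝ Z w` for `Z = t X + (1 - t) Y`. -/
lemma dotProduct_inv_mulVec_smul_add_smul [DecidableEq ι] {X Y : Matrix ι ι R} {t : R}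
    (hZ : IsUnit (t • X + (1 - t) • Y).det) {w v : ι → R} (hwv : (t • X + (1 - t) • Y) *ᵥ w = v) :
    v ⬝ᵥ (t • X + (1 - t) • Y)⁻¹ *ᵥ v =
      t * (2 * (w ⬝ᵥ v) - w ⬝ᵥ X *ᵥ w) + (1 - t) * (2 * (w ⬝ᵥ v) - w ⬝ᵥ Y *ᵥ w) := by
  have hw : (t • X + (1 - t) • Y)⁻¹ *ᵥ v = w := by
    rw [← hwv, mulVec_mulVec, nonsing_inv_mul _ hZ, one_mulVec]
  have hsplit := dotProduct_smul_add_smul_mulVec X Y t (1 - t) w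
  rw [hwv] at hsplit
  rw [hw, dotProduct_comm]
  linear_combination (-1 : R) * hsplit

end CommRing

variable [Fintype ι] [DecidableEq ι]

lemma PosDef.two_mul_dotProduct_sub_le {X : Matrix ι ι ℝ} (hX : X.PosDef) (u v : ι → ℝ) :
    2 * (u ⬝ᵥ v) - u ⬝ᵥ X *ᵥ u ≤ v ⬝ᵥ X⁻¹ *ᵥ v := by
  have h := hX.inv.posSemidef.dotProduct_mulVec_nonneg (X *ᵥ u - v)
  rw [star_trivial] at h
  linarith [(isHermitian_iff_isSymm.1 hX.isHermitian).dotProduct_inv_mulVec_sub_eq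
    ((isUnit_iff_isUnit_det X).1 hX.isUnit) u v]

lemma PosDef.two_mul_dotProduct_sub_lt {X : Matrix ι ι ℝ} (hX : X.PosDef) {u v : ι → ℝ}
    (huv : X *ᵥ u ≠ v) : 2 * (u ⬝ᵥ v) - u ⬝ᵥ X *ᵥ u < v ⬝ᵥ X⁻¹ *ᵥ v := by
  have h := hX.inv.dotProduct_mulVec_pos (sub_ne_zero.2 huv)
  rw [star_trivial] at h
  linarith [(isHermitian_iff_isSymm.1 hX.isHermitian).dotProduct_inv_mulVec_sub_eq
    ((isUnit_iff_isUnit_det X).1 hX.isUnit) u v]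

theorem PosDef.inv_smul_add_smul_le {X Y : Matrix ι ι ℝ} (hX : X.PosDef) (hY : Y.PosDef)
    {t : ℝ} (ht0 : 0 ≤ t) (ht1 : t ≤ 1) :
    (t • X + (1 - t) • Y)⁻¹ ≤ t • X⁻¹ + (1 - t) • Y⁻¹ := by
  set Z := t • X + (1 - t) • Y
  have hZ : Z.PosDef := convex_setOf_posDef hX hY ht0 (by linarith) (by ring)
  have hZdet : IsUnit Z.det := (isUnit_iff_isUnit_det Z).1 hZ.isUnit
  have hherm : (t • X⁻¹ + (1 - t) • Y⁻¹ - Z⁻¹).IsHermitian :=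
    ((hX.inv.posSemidef.smul ht0).add (hY.inv.posSemidef.smul (by linarith))).isHermitian.sub
      hZ.inv.isHermitian
  refine le_iff.2 (PosSemidef.of_dotProduct_mulVec_nonneg hherm fun v => ?_)
  have hv := dotProduct_inv_mulVec_smul_add_smul hZdet (w := Z⁻¹ *ᵥ v) (v := v)
    (by rw [mulVec_mulVec, mul_nonsing_inv _ hZdet, one_mulVec])
  rw [star_trivial, sub_mulVec, dotProduct_sub, dotProduct_smul_add_smul_mulVec]
  nlinarith [hX.two_mul_dotProduct_sub_le (Z⁻¹ *ᵥ v) v, hY.two_mul_dotProduct_sub_le (Z⁻¹ *ᵥ v) v]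

theorem PosDef.inv_smul_add_smul_lt {X Y : Matrix ι ι ℝ} (hX : X.PosDef) (hY : Y.PosDef)
    (hXY : X ≠ Y) {t : ℝ} (ht0 : 0 < t) (ht1 : t < 1) :
    (t • X + (1 - t) • Y)⁻¹ < t • X⁻¹ + (1 - t) • Y⁻¹ := by
  refine (hX.inv_smul_add_smul_le hY ht0.le ht1.le).lt_of_ne fun heq => ?_
  have hZdet : IsUnit (t • X + (1 - t) • Y).det := (isUnit_iff_isUnit_det _).1
    (convex_setOf_posDef hX hY ht0.le (by linarith) (by ring)).isUnit
  have hXZ : X ≠ t • X + (1 - t) • Y := by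
    intro h
    have hdiff : (1 - t) • (Y - X) = 0 := by
      rw [← sub_eq_zero_of_eq h.symm]
      module
    rcases smul_eq_zero.1 hdiff with h1 | h2
    · linarith
    · exact hXY (sub_eq_zero.1 h2).symm
  obtain ⟨w, hw⟩ : ∃ w, X *ᵥ w ≠ (t • X + (1 - t) • Y) *ᵥ w := by
    by_contra! h
    exact hXZ (ext_iff_mulVec.2 h)
  set v := (t • X + (1 - t) • Y) *ᵥ w with hv
  have hquad : v ⬝ᵥ (t • X + (1 - t) • Y)⁻¹ *ᵥ v = v ⬝ᵥ (t • X⁻¹ + (1 - t) • Y⁻¹) *ᵥ v := by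
    rw [heq]
  rw [dotProduct_inv_mulVec_smul_add_smul hZdet hv.symm,
    dotProduct_smul_add_smul_mulVec X⁻¹ Y⁻¹ t (1 - t) v] at hquad
  nlinarith [hX.two_mul_dotProduct_sub_lt hw, hY.two_mul_dotProduct_sub_le w v]

lemma trace_transpose_mul_self_mul_lt_of_lt {S A B : Matrix ι ι ℝ} (hS : IsUnit S.det)
    (hAB : A < B) :
    trace (Sᵀ * S * A) < trace (Sᵀ * S * B) := by
  have hpsd : (S * (B - A) * Sᵀ).PosSemidef := by
    simpa only [conjTranspose_eq_transpose_of_trivial] using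
      (le_iff.1 hAB.le).mul_mul_conjTranspose_same S
  have hne : S * (B - A) * Sᵀ ≠ 0 := by
    rw [Ne, ((isUnit_iff_isUnit_det _).2 (by rwa [det_transpose])).mul_left_eq_zero,
      ((isUnit_iff_isUnit_det S).2 hS).mul_right_eq_zero, sub_eq_zero]
    exact hAB.ne'
  have hcycle : trace (Sᵀ * S * (B - A)) = trace (S * (B - A) * Sᵀ) := by
    rw [Matrix.mul_assoc, trace_mul_comm, Matrix.mul_assoc]
  have htr : 0 < trace (Sᵀ * S * (B - A)) :=
    hcycle ▸ hpsd.trace_nonneg.lt_of_ne (Ne.symm (mt hpsd.trace_eq_zero_iff.1 hne))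
  rw [Matrix.mul_sub, trace_sub] at htr
  linarith

end Matrix

theorem trace_inv_strictly_convex_general (n : ℕ)
    (S : Matrix (Fin n) (Fin n) ℝ) (hS : IsUnit S.det) :
    Convex ℝ {X : Matrix (Fin n) (Fin n) ℝ | X.PosDef} ∧
    ∀ X Y : Matrix (Fin n) (Fin n) ℝ, X.PosDef → Y.PosDef → X ≠ Y →
      ∀ t : ℝ, 0 < t → t < 1 →
        Matrix.trace (Sᵀ * S * (t • X + (1 - t) • Y)⁻¹) <
          t * Matrix.trace (Sᵀ * S * X⁻¹) + (1 - t) * Matrix.trace (Sᵀ * S * Y⁻¹) := by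
  refine ⟨convex_setOf_posDef, fun X Y hX hY hXY t ht0 ht1 => ?_⟩
  have h := trace_transpose_mul_self_mul_lt_of_lt hS (hX.inv_smul_add_smul_lt hY hXY ht0 ht1)
  rwa [Matrix.mul_add, Matrix.mul_smul, Matrix.mul_smul, trace_add, trace_smul, trace_smul,
    smul_eq_mul, smul_eq_mul] at h

/-- Lemma `convex_trace`: for invertible `S`, the map `X ↦ tr(SᵀS X⁻¹)` is
strictly convex on the (convex) set of symmetric positive-definite matrices. -/
theorem trace_inv_strictly_convex (n : ℕ) (hn : 1 ≤ n)
    (S : Matrix (Fin n) (Fin n) ℝ) (hS : IsUnit S.det) :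
    Convex ℝ {X : Matrix (Fin n) (Fin n) ℝ | X.PosDef} ∧
    ∀ X Y : Matrix (Fin n) (Fin n) ℝ, X.PosDef → Y.PosDef → X ≠ Y →
      ∀ t : ℝ, 0 < t → t < 1 →
        Matrix.trace (Sᵀ * S * (t • X + (1 - t) • Y)⁻¹) <
          t * Matrix.trace (Sᵀ * S * X⁻¹) + (1 - t) * Matrix.trace (Sᵀ * S * Y⁻¹) :=
  trace_inv_strictly_convex_general n S hS
end

section
/- Let n ≥ 1 and let S be an invertible n×n real matrix. Suppose X is an n×n real symmetric positive-definite matrix with all diagonal entries at most 1 that minimizes tr(SᵀS X⁻¹), i.e., tr(SᵀS X⁻¹) ≤ tr(SᵀS Y⁻¹) for every symmetric positive-definite Y with all diagonal entries at most 1. Then X_{ii} = 1 for every index i. -/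
/-!
If `X i i < 1`, raise that entry to `1`: `Y = X + ε Eᵢᵢ` with `ε = 1 - X i i` is still
feasible, and by the Sherman–Morrison formula
`tr(A Y⁻¹) = tr(A X⁻¹) - ε / (1 + ε (X⁻¹)ᵢᵢ) · (X⁻¹ A X⁻¹)ᵢᵢ`,
which is strictly smaller because `X⁻¹ A X⁻¹` is positive definite when `A = SᵀS` is.
-/

open Matrix

namespace Matrix

variable {n : Type*} [Fintype n] [DecidableEq n]

section Field

variable {K : Type*} [Field K]

theorem inv_add_single_same {X : Matrix n n K} (hX : IsUnit X) (i : n) (ε : K)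
    (h : 1 + ε * X⁻¹ i i ≠ 0) :
    (X + single i i ε)⁻¹ = X⁻¹ - (ε / (1 + ε * X⁻¹ i i)) • (X⁻¹ * single i i 1 * X⁻¹) := by
  refine inv_eq_right_inv ?_
  set c := ε / (1 + ε * X⁻¹ i i)
  have hc : ε - c - ε * c * X⁻¹ i i = 0 := by
    simp only [c]
    field_simp
    ring
  have hEXE : single i i (1 : K) * X⁻¹ * single i i 1 = X⁻¹ i i • single i i 1 := by
    simp [smul_single]
  have hε : single i i ε = ε • single i i (1 : K) := by simp [smul_single]
  calc (X + single i i ε) * (X⁻¹ - c • (X⁻¹ * single i i 1 * X⁻¹))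
      = 1 + (ε - c - ε * c * X⁻¹ i i) • (single i i 1 * X⁻¹) := by
        simp only [hε, add_mul, mul_sub, mul_nonsing_inv X ((isUnit_iff_isUnit_det X).1 hX),
          mul_smul_comm, smul_mul_assoc, ← Matrix.mul_assoc, one_mul, hEXE, smul_smul]
        module
    _ = 1 := by rw [hc, zero_smul, add_zero]

theorem trace_mul_inv_add_single_same (A : Matrix n n K) {X : Matrix n n K}
    (hX : IsUnit X) (i : n) (ε : K) (h : 1 + ε * X⁻¹ i i ≠ 0) :
    trace (A * (X + single i i ε)⁻¹)
      = trace (A * X⁻¹) - ε / (1 + ε * X⁻¹ i i) * (X⁻¹ * A * X⁻¹) i i := by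
  rw [inv_add_single_same hX i ε h, mul_sub, trace_sub, mul_smul_comm, trace_smul, smul_eq_mul,
    ← Matrix.mul_assoc, ← Matrix.mul_assoc, trace_mul_cycle, ← Matrix.mul_assoc, trace_mul_single]
  simp

end Field

theorem PosDef.trace_mul_inv_add_single_lt {A X : Matrix n n ℝ} (hA : A.PosDef)
    (hX : X.PosDef) (i : n) {ε : ℝ} (hε : 0 < ε) :
    trace (A * (X + single i i ε)⁻¹) < trace (A * X⁻¹) := by
  have hXinv_ii : 0 < X⁻¹ i i := hX.inv.diag_pos
  have hXAX : (X⁻¹ * A * X⁻¹).PosDef := by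
    have hinj : Function.Injective X⁻¹.mulVec :=
      mulVec_injective_iff_isUnit.2 (isUnit_nonsing_inv_iff.2 hX.isUnit)
    simpa only [hX.inv.isHermitian.eq] using hA.conjTranspose_mul_mul_same hinj
  rw [trace_mul_inv_add_single_same A hX.isUnit i ε (by positivity)]
  exact sub_lt_self _ (mul_pos (by positivity) hXAX.diag_pos)

end Matrix

theorem minimizer_diagonal_eq_one_general (n : ℕ)
    (S : Matrix (Fin n) (Fin n) ℝ) (hS : IsUnit S.det)
    (X : Matrix (Fin n) (Fin n) ℝ) (hX : X.PosDef)
    (hdiag : ∀ i : Fin n, X i i ≤ 1)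
    (hmin : ∀ Y : Matrix (Fin n) (Fin n) ℝ, Y.PosDef → (∀ i : Fin n, Y i i ≤ 1) →
      Matrix.trace (Sᵀ * S * X⁻¹) ≤ Matrix.trace (Sᵀ * S * Y⁻¹)) :
    ∀ i : Fin n, X i i = 1 := by
  intro i
  by_contra hne
  have hε : 0 < 1 - X i i := sub_pos.2 ((hdiag i).lt_of_ne hne)
  set Y := X + single i i (1 - X i i)
  have hY : Y.PosDef := hX.add_posSemidef <| by
    rw [← diagonal_single]
    exact .diagonal (Pi.single_nonneg.2 hε.le)
  have hYdiag : ∀ j, Y j j ≤ 1 := by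
    intro j
    rcases eq_or_ne j i with rfl | hj
    · simp [Y]
    · simpa [Y, single_apply_of_row_ne hj.symm] using hdiag j
  have hSS : (Sᵀ * S).PosDef := by
    simpa using PosDef.conjTranspose_mul_self S
      (mulVec_injective_iff_isUnit.2 ((isUnit_iff_isUnit_det S).2 hS))
  exact (hmin Y hY hYdiag).not_gt (hSS.trace_mul_inv_add_single_lt hX i hε)

/-- Lemma `solutions_on_boundary`: any minimizer of `X ↦ tr(SᵀS X⁻¹)` over
symmetric positive-definite matrices with diagonal entries at most `1` has
all diagonal entries equal to `1`. -/
theorem minimizer_diagonal_eq_one (n : ℕ) (hn : 1 ≤ n)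
    (S : Matrix (Fin n) (Fin n) ℝ) (hS : IsUnit S.det)
    (X : Matrix (Fin n) (Fin n) ℝ) (hX : X.PosDef)
    (hdiag : ∀ i : Fin n, X i i ≤ 1)
    (hmin : ∀ Y : Matrix (Fin n) (Fin n) ℝ, Y.PosDef → (∀ i : Fin n, Y i i ≤ 1) →
      Matrix.trace (Sᵀ * S * X⁻¹) ≤ Matrix.trace (Sᵀ * S * Y⁻¹)) :
    ∀ i : Fin n, X i i = 1 :=
  minimizer_diagonal_eq_one_general n S hS X hX hdiag hmin
end

section
/- Let n ≥ 1, let S be an invertible n×n real matrix, and let λ ∈ ℝⁿ have all entries strictly positive. Set D = diag(λ), D^{1/2} = diag(√λ₁, …, √λₙ), and let M^{1/2} denote the unique positive-semidefinite square root of the positive-definite matrix M = D^{1/2}(SᵀS)D^{1/2}. Then the matrix X = D^{−1/2} M^{1/2} D^{−1/2} is symmetric positive definite and satisfies SᵀS = X·diag(λ)·X. -/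
/-!
`M = D^{1/2} (SᵀS) D^{1/2}` is a congruence of the positive definite `SᵀS` by an invertible
diagonal matrix, hence positive definite; its square root `Q` is then positive semidefinite with
`Q²` invertible, hence positive definite, and so is its diagonal congruence `X`. Finally
`D^{-1/2} D D^{-1/2} = 1` collapses `X D X` to `D^{-1/2} Q² D^{-1/2} = SᵀS`.
-/

open Matrix

open scoped ComplexOrder in
/-- The positive semidefinite square root of a positive semidefinite matrix
(Mathlib's former `Matrix.PosSemidef.sqrt`, removed since; restored verbatim). -/
noncomputable def Matrix.PosSemidef.sqrt {n : Type*} {𝕜 : Type*} [Fintype n] [DecidableEq n]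
    [RCLike 𝕜] {A : Matrix n n 𝕜} (hA : A.PosSemidef) : Matrix n n 𝕜 :=
  hA.1.eigenvectorUnitary.1 * diagonal ((↑) ∘ (√·) ∘ hA.1.eigenvalues) *
  (star hA.1.eigenvectorUnitary : Matrix n n 𝕜)

namespace Matrix

section Sqrt

open scoped ComplexOrder

variable {m 𝕜 : Type*} [Fintype m] [DecidableEq m] [RCLike 𝕜] {A : Matrix m m 𝕜}

lemma PosSemidef.sqrt_mul_self (hA : A.PosSemidef) : hA.sqrt * hA.sqrt = A := by
  set U : Matrix m m 𝕜 := hA.1.eigenvectorUnitary.1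
  set R : Matrix m m 𝕜 := diagonal ((↑) ∘ (√·) ∘ hA.1.eigenvalues)
  have hU : star U * U = 1 := Unitary.coe_star_mul_self hA.1.eigenvectorUnitary
  have hR : R * R = diagonal (RCLike.ofReal ∘ hA.1.eigenvalues) := by
    simp only [R, diagonal_mul_diagonal, Function.comp_apply, ← RCLike.ofReal_mul,
      Real.mul_self_sqrt (hA.eigenvalues_nonneg _)]
    rfl
  calc hA.sqrt * hA.sqrt = U * (R * (star U * U) * R) * star U := by
        simp only [PosSemidef.sqrt, U, R, Matrix.mul_assoc]
    _ = A := by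
        rw [hU, Matrix.mul_one, hR]
        conv_rhs => rw [hA.1.spectral_theorem, Unitary.conjStarAlgAut_apply]

lemma PosSemidef.posSemidef_sqrt (hA : A.PosSemidef) : hA.sqrt.PosSemidef := by
  have hR : (diagonal (((↑) : ℝ → 𝕜) ∘ (√·) ∘ hA.1.eigenvalues)).PosSemidef :=
    posSemidef_diagonal_iff.mpr fun i => by simp [Real.sqrt_nonneg]
  simpa only [PosSemidef.sqrt, star_eq_conjTranspose] using
    hR.mul_mul_conjTranspose_same (hA.1.eigenvectorUnitary : Matrix m m 𝕜)

lemma PosSemidef.posDef_sqrt (hA : A.PosSemidef) (hA' : A.PosDef) : hA.sqrt.PosDef := by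
  refine hA.posSemidef_sqrt.posDef_iff_isUnit.mpr ?_
  have hdet : IsUnit (hA.sqrt.det * hA.sqrt.det) := by
    rw [← det_mul, hA.sqrt_mul_self, ← isUnit_iff_isUnit_det]
    exact hA'.isUnit
  exact (isUnit_iff_isUnit_det _).mpr (isUnit_of_mul_isUnit_left hdet)

end Sqrt

section Diagonal

variable {m K : Type*} [Fintype m] [DecidableEq m]

lemma PosDef.diagonal_mul_mul_diagonal {A : Matrix m m ℝ} (hA : A.PosDef) {d : m → ℝ}
    (hd : ∀ i, d i ≠ 0) : (diagonal d * A * diagonal d).PosDef := by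
  have hinj : Function.Injective (diagonal d).mulVec :=
    mulVec_injective_iff_isUnit.mpr <|
      isUnit_diagonal.mpr <| Pi.isUnit_iff.mpr fun i => (hd i).isUnit
  simpa using hA.conjTranspose_mul_mul_same hinj

variable [Field K]

lemma diagonal_inv_mul_diagonal_mul_diagonal_inv {d : m → K} (hd : ∀ i, d i ≠ 0)
    (A : Matrix m m K) :
    diagonal (fun i => (d i)⁻¹) * (diagonal d * A * diagonal d) * diagonal (fun i => (d i)⁻¹)
      = A := by
  have hcancel : diagonal (fun i => (d i)⁻¹) * diagonal d = 1 := by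
    rw [diagonal_mul_diagonal, ← diagonal_one]
    exact congrArg diagonal (funext fun i => inv_mul_cancel₀ (hd i))
  have hcancel' : diagonal d * diagonal (fun i => (d i)⁻¹) = 1 := by
    rw [diagonal_mul_diagonal, ← diagonal_one]
    exact congrArg diagonal (funext fun i => mul_inv_cancel₀ (hd i))
  calc _ = (diagonal (fun i => (d i)⁻¹) * diagonal d) * A *
        (diagonal d * diagonal (fun i => (d i)⁻¹)) := by simp only [Matrix.mul_assoc]
    _ = A := by rw [hcancel, hcancel', Matrix.one_mul, Matrix.mul_one]

lemma diagonal_inv_mul_diagonal_mul_self_mul_diagonal_inv {d : m → K} (hd : ∀ i, d i ≠ 0) :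
    diagonal (fun i => (d i)⁻¹) * diagonal (fun i => d i * d i) * diagonal (fun i => (d i)⁻¹)
      = 1 := by
  simpa using diagonal_inv_mul_diagonal_mul_diagonal_inv hd 1

end Diagonal

end Matrix

theorem gen_sqrt_solves_stationarity_general (n : ℕ)
    (S : Matrix (Fin n) (Fin n) ℝ) (hS : IsUnit S.det)
    (lam : Fin n → ℝ) (hlam : ∀ i, 0 < lam i)
    (hM : (Matrix.diagonal (fun i => Real.sqrt (lam i)) * (Sᵀ * S) *
            Matrix.diagonal (fun i => Real.sqrt (lam i))).PosSemidef) :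
    (Matrix.diagonal (fun i => (Real.sqrt (lam i))⁻¹) * hM.sqrt *
        Matrix.diagonal (fun i => (Real.sqrt (lam i))⁻¹)).PosDef ∧
    Sᵀ * S =
      (Matrix.diagonal (fun i => (Real.sqrt (lam i))⁻¹) * hM.sqrt *
        Matrix.diagonal (fun i => (Real.sqrt (lam i))⁻¹)) *
      Matrix.diagonal lam *
      (Matrix.diagonal (fun i => (Real.sqrt (lam i))⁻¹) * hM.sqrt *
        Matrix.diagonal (fun i => (Real.sqrt (lam i))⁻¹)) := by
  have hsqrt : ∀ i, √(lam i) ≠ 0 := fun i => (Real.sqrt_pos.mpr (hlam i)).ne'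
  have hSTS : (Sᵀ * S).PosDef := by
    simpa using PosDef.conjTranspose_mul_self S
      (mulVec_injective_iff_isUnit.mpr ((isUnit_iff_isUnit_det S).mpr hS))
  have hQ : hM.sqrt.PosDef := hM.posDef_sqrt (hSTS.diagonal_mul_mul_diagonal hsqrt)
  refine ⟨hQ.diagonal_mul_mul_diagonal fun i => inv_ne_zero (hsqrt i), ?_⟩
  have hlam_sq : diagonal lam = diagonal (fun i => √(lam i) * √(lam i)) :=
    congrArg diagonal (funext fun i => (Real.mul_self_sqrt (hlam i).le).symm)
  have hcancel := diagonal_inv_mul_diagonal_mul_diagonal_inv hsqrt (Sᵀ * S)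
  have hcollapse := diagonal_inv_mul_diagonal_mul_self_mul_diagonal_inv hsqrt
  rw [← hlam_sq] at hcollapse
  set E : Matrix (Fin n) (Fin n) ℝ := diagonal fun i => (√(lam i))⁻¹
  calc Sᵀ * S = E * (hM.sqrt * hM.sqrt) * E := by rw [hM.sqrt_mul_self, hcancel]
    _ = E * hM.sqrt * (E * diagonal lam * E) * hM.sqrt * E := by
        rw [hcollapse, Matrix.mul_one]
        simp only [Matrix.mul_assoc]
    _ = E * hM.sqrt * E * diagonal lam * (E * hM.sqrt * E) := by simp only [Matrix.mul_assoc]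

/-- The generalized matrix square root construction (`eq:gen_sqrt_x`): for
`λ` with strictly positive entries and `M = D^{1/2}(SᵀS)D^{1/2}` (with
`D = diag(λ)`), the matrix `X = D^{-1/2} M^{1/2} D^{-1/2}` is symmetric
positive definite and satisfies `SᵀS = X·diag(λ)·X`. -/
theorem gen_sqrt_solves_stationarity (n : ℕ) (hn : 1 ≤ n)
    (S : Matrix (Fin n) (Fin n) ℝ) (hS : IsUnit S.det)
    (lam : Fin n → ℝ) (hlam : ∀ i, 0 < lam i)
    (hM : (Matrix.diagonal (fun i => Real.sqrt (lam i)) * (Sᵀ * S) *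
            Matrix.diagonal (fun i => Real.sqrt (lam i))).PosSemidef) :
    (Matrix.diagonal (fun i => (Real.sqrt (lam i))⁻¹) * hM.sqrt *
        Matrix.diagonal (fun i => (Real.sqrt (lam i))⁻¹)).PosDef ∧
    Sᵀ * S =
      (Matrix.diagonal (fun i => (Real.sqrt (lam i))⁻¹) * hM.sqrt *
        Matrix.diagonal (fun i => (Real.sqrt (lam i))⁻¹)) *
      Matrix.diagonal lam *
      (Matrix.diagonal (fun i => (Real.sqrt (lam i))⁻¹) * hM.sqrt *
        Matrix.diagonal (fun i => (Real.sqrt (lam i))⁻¹)) :=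
  gen_sqrt_solves_stationarity_general n S hS lam hlam hM
end

section
/- Let n ≥ 1 and let S be an invertible n×n real matrix. Then (i) the infimum of ‖S·H⁻¹‖_F² over all invertible n×n real matrices H whose columns all have ℓ2-norm at most 1 is attained, and equals the infimum of the same quantity over the subset of such H that are additionally lower-triangular; and (ii) there is exactly one invertible lower-triangular H with strictly positive diagonal entries and all column ℓ2-norms at most 1 attaining this infimum, i.e., satisfying ‖S·H⁻¹‖_F² ≤ ‖S·G⁻¹‖_F² for every invertible lower-triangular G with all column ℓ2-norms at most 1. -/
/-!
For invertible `H` the loss depends on `H` only through its Gram matrix `A = HᵀH`: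
`‖S H⁻¹‖_F² = ∑ᵢ sᵢ ⬝ A⁻¹ sᵢ` over the rows `sᵢ` of `S`, and the column constraint reads
`Aᵢᵢ ≤ 1`. A minimiser exists by compactness (of the pairs `(H, H⁻¹)` in a sublevel set), and the
Cholesky factorisation `A = LᵀL`, with `L` lower triangular with positive diagonal, turns it into a
lower-triangular one. Each `A ↦ s ⬝ A⁻¹ s` is convex on positive definite matrices, and the sum is
strictly convex because the rows of `S` span, so the optimal Gram matrix is unique, and so is its
Cholesky factor.
-/

open Matrix

namespace Matrix

section GramLoss

variable {m : Type*} [Fintype m] [DecidableEq m]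

omit [DecidableEq m] in
lemma transpose_mul_self_apply_self (H : Matrix m m ℝ) (i : m) :
    (Hᵀ * H) i i = ∑ j, H j i ^ 2 := by
  simp [mul_apply, sq]

lemma posDef_transpose_mul_self {H : Matrix m m ℝ} (hH : IsUnit H.det) : (Hᵀ * H).PosDef := by
  simpa using PosDef.conjTranspose_mul_self H
    (mulVec_injective_iff_isUnit.mpr ((isUnit_iff_isUnit_det H).mpr hH))

omit [Fintype m] [DecidableEq m] in
lemma PosDef.isSymm {A : Matrix m m ℝ} (hA : A.PosDef) : A.IsSymm :=
  isHermitian_iff_isSymm.mp hA.isHermitian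

lemma PosDef.isUnit_det {A : Matrix m m ℝ} (hA : A.PosDef) : IsUnit A.det :=
  (isUnit_iff_isUnit_det A).mp hA.isUnit

noncomputable def gramLoss (S A : Matrix m m ℝ) : ℝ :=
  ∑ i, S i ⬝ᵥ (A⁻¹ *ᵥ S i)

lemma sum_sq_mul_inv_eq_gramLoss (S H : Matrix m m ℝ) :
    ∑ i, ∑ j, (S * H⁻¹) i j ^ 2 = gramLoss S (Hᵀ * H) := by
  rw [gramLoss, mul_inv_rev, ← transpose_nonsing_inv]
  refine Finset.sum_congr rfl fun i _ => ?_
  rw [← mulVec_mulVec, dotProduct_mulVec, mulVec_transpose]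
  simp only [dotProduct, vecMul, mul_apply, sq]

/-- The variational formula `x ⬝ A⁻¹ x = max_y (2 y ⬝ x - y ⬝ A y)`, with the maximiser `A⁻¹ x`. -/
lemma dotProduct_inv_mulVec_sub_eq {A : Matrix m m ℝ} (hA : A.IsSymm) (hdet : IsUnit A.det)
    (x y : m → ℝ) :
    x ⬝ᵥ (A⁻¹ *ᵥ x) - (2 * (y ⬝ᵥ x) - y ⬝ᵥ (A *ᵥ y)) =
      (y - A⁻¹ *ᵥ x) ⬝ᵥ (A *ᵥ (y - A⁻¹ *ᵥ x)) := by
  have hx : A *ᵥ (A⁻¹ *ᵥ x) = x := by rw [mulVec_mulVec, mul_nonsing_inv _ hdet, one_mulVec]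
  have hsymm : (A⁻¹ *ᵥ x) ⬝ᵥ (A *ᵥ y) = y ⬝ᵥ x := by
    rw [dotProduct_mulVec, ← mulVec_transpose, hA.eq, hx, dotProduct_comm]
  rw [mulVec_sub, hx, sub_dotProduct, dotProduct_sub, dotProduct_sub, hsymm, dotProduct_comm x]
  ring

lemma PosDef.two_mul_dotProduct_sub_le_s11 {A : Matrix m m ℝ} (hA : A.PosDef) (x y : m → ℝ) :
    2 * (y ⬝ᵥ x) - y ⬝ᵥ (A *ᵥ y) ≤ x ⬝ᵥ (A⁻¹ *ᵥ x) := by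
  have h := dotProduct_inv_mulVec_sub_eq hA.isSymm hA.isUnit_det x y
  have := hA.posSemidef.dotProduct_mulVec_nonneg (y - A⁻¹ *ᵥ x)
  rw [star_trivial] at this
  linarith

lemma PosDef.two_mul_dotProduct_sub_lt_s11 {A : Matrix m m ℝ} (hA : A.PosDef) (x : m → ℝ)
    {y : m → ℝ} (hy : y ≠ A⁻¹ *ᵥ x) :
    2 * (y ⬝ᵥ x) - y ⬝ᵥ (A *ᵥ y) < x ⬝ᵥ (A⁻¹ *ᵥ x) := by
  have h := dotProduct_inv_mulVec_sub_eq hA.isSymm hA.isUnit_det x y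
  have := hA.dotProduct_mulVec_pos (sub_ne_zero.mpr hy)
  rw [star_trivial] at this
  linarith

/-- Evaluate the variational formula for `A` and for `B` at the maximiser `y = (aA + bB)⁻¹ x`
of the one for `aA + bB`; `y` cannot be both `A⁻¹ x` and `B⁻¹ x` unless these agree. -/
lemma PosDef.dotProduct_inv_mulVec_smul_add_smul_le {A B : Matrix m m ℝ} (hA : A.PosDef)
    (hB : B.PosDef) {a b : ℝ} (ha : 0 < a) (hb : 0 < b) (hab : a + b = 1) (x : m → ℝ) :
    x ⬝ᵥ ((a • A + b • B)⁻¹ *ᵥ x) ≤ a * x ⬝ᵥ (A⁻¹ *ᵥ x) + b * x ⬝ᵥ (B⁻¹ *ᵥ x) ∧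
      (A⁻¹ *ᵥ x ≠ B⁻¹ *ᵥ x →
        x ⬝ᵥ ((a • A + b • B)⁻¹ *ᵥ x) < a * x ⬝ᵥ (A⁻¹ *ᵥ x) + b * x ⬝ᵥ (B⁻¹ *ᵥ x)) := by
  set C := a • A + b • B
  have hC : C.PosDef := (hA.smul ha).add (hB.smul hb)
  set y := C⁻¹ *ᵥ x
  have hmax : x ⬝ᵥ (C⁻¹ *ᵥ x) =
      a * (2 * (y ⬝ᵥ x) - y ⬝ᵥ (A *ᵥ y)) + b * (2 * (y ⬝ᵥ x) - y ⬝ᵥ (B *ᵥ y)) := by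
    have h := dotProduct_inv_mulVec_sub_eq hC.isSymm hC.isUnit_det x y
    rw [sub_self, mulVec_zero, dotProduct_zero] at h
    simp only [C, add_mulVec, smul_mulVec, dotProduct_add, dotProduct_smul, smul_eq_mul] at h
    linear_combination h - 2 * (y ⬝ᵥ x) * hab
  have hA' := hA.two_mul_dotProduct_sub_le_s11 x y
  have hB' := hB.two_mul_dotProduct_sub_le_s11 x y
  refine ⟨by rw [hmax]; gcongr, fun hne => ?_⟩
  have hy : y ≠ A⁻¹ *ᵥ x ∨ y ≠ B⁻¹ *ᵥ x := by
    by_contra! h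
    exact hne (h.1 ▸ h.2)
  rw [hmax]
  rcases hy with hy | hy
  · nlinarith [hA.two_mul_dotProduct_sub_lt_s11 x hy]
  · nlinarith [hB.two_mul_dotProduct_sub_lt_s11 x hy]

omit [Fintype m] [DecidableEq m] in
lemma convex_setOf_posDef_s11 : Convex ℝ {A : Matrix m m ℝ | A.PosDef} := by
  intro A hA B hB a b ha hb hab
  rcases ha.eq_or_lt with rfl | ha
  · simp_all
  rcases hb.eq_or_lt with rfl | hb
  · simp_all
  exact (hA.smul ha).add (hB.smul hb)

lemma exists_inv_mulVec_row_ne {S A B : Matrix m m ℝ} (hS : IsUnit S.det) (hA : IsUnit A.det)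
    (hAB : A ≠ B) : ∃ i, A⁻¹ *ᵥ S i ≠ B⁻¹ *ᵥ S i := by
  by_contra! h
  have hcol : A⁻¹ * Sᵀ = B⁻¹ * Sᵀ := by
    ext k i
    simpa [mul_apply, mulVec, dotProduct] using congrFun (h i) k
  have hSt : IsUnit Sᵀ := (isUnit_iff_isUnit_det _).mpr (by rwa [det_transpose])
  exact hAB (inv_inj (hSt.mul_left_injective hcol) hA)

theorem strictConvexOn_gramLoss {S : Matrix m m ℝ} (hS : IsUnit S.det) :
    StrictConvexOn ℝ {A : Matrix m m ℝ | A.PosDef} (gramLoss S) := by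
  refine ⟨convex_setOf_posDef_s11, fun A hA B hB hAB a b ha hb hab => ?_⟩
  have hrow i := PosDef.dotProduct_inv_mulVec_smul_add_smul_le hA hB ha hb hab (S i)
  obtain ⟨i, hi⟩ := exists_inv_mulVec_row_ne hS hA.isUnit_det hAB
  calc gramLoss S (a • A + b • B)
      < ∑ i, (a * S i ⬝ᵥ (A⁻¹ *ᵥ S i) + b * S i ⬝ᵥ (B⁻¹ *ᵥ S i)) :=
        Finset.sum_lt_sum (fun i _ => (hrow i).1) ⟨i, Finset.mem_univ i, (hrow i).2 hi⟩
    _ = a • gramLoss S A + b • gramLoss S B := by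
        simp only [gramLoss, Finset.sum_add_distrib, Finset.mul_sum, smul_eq_mul]

/-- The Gram matrices `HᵀH` of the invertible `H` whose columns have norm at most one. -/
def feasibleGram : Set (Matrix m m ℝ) :=
  {A | A.PosDef ∧ ∀ i, A i i ≤ 1}

lemma transpose_mul_self_mem_feasibleGram_iff {H : Matrix m m ℝ} (hH : IsUnit H.det) :
    Hᵀ * H ∈ feasibleGram ↔ ∀ i, ∑ j, H j i ^ 2 ≤ 1 := by
  simp [feasibleGram, posDef_transpose_mul_self hH, transpose_mul_self_apply_self]

omit [Fintype m] [DecidableEq m] in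
lemma convex_feasibleGram : Convex ℝ (feasibleGram : Set (Matrix m m ℝ)) := by
  refine convex_setOf_posDef_s11.inter fun A hA B hB a b ha hb hab i => ?_
  simp only [add_apply, smul_apply, smul_eq_mul]
  nlinarith [hA i, hB i]

end GramLoss

section Cholesky

variable {m : Type*} [Fintype m] [LinearOrder m]

lemma PosDef.exists_isLowerTriangular_mul_transpose [WellFoundedLT m] [LocallyFiniteOrderBot m]
    {M : Matrix m m ℝ} (hM : M.PosDef) :
    ∃ C : Matrix m m ℝ, C.IsLowerTriangular ∧ C * Cᵀ = M := by
  have hdiag : (LDL.diag hM).PosDef := by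
    rw [LDL.diag_eq_lowerInv_conj]
    exact hM.mul_mul_conjTranspose_same (vecMul_injective_of_isUnit (isUnit_of_invertible _))
  have hd := posDef_diagonal_iff.mp hdiag
  refine ⟨LDL.lower hM * diagonal (fun i => √(LDL.diagEntries hM i)), ?_, ?_⟩
  · refine BlockTriangular.mul ?_ (blockTriangular_diagonal _)
    exact blockTriangular_inv_of_blockTriangular fun i j hij => LDL.lowerInv_triangular hM hij
  · have hsq : diagonal (fun i => √(LDL.diagEntries hM i)) *
        (diagonal (fun i => √(LDL.diagEntries hM i)))ᵀ = LDL.diag hM := by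
      rw [diagonal_transpose, diagonal_mul_diagonal, LDL.diag]
      congr 1
      exact funext fun i => Real.mul_self_sqrt (hd i).le
    conv_rhs => rw [← LDL.lower_conj_diag hM, conjTranspose_eq_transpose_of_trivial, ← hsq]
    simp only [transpose_mul, Matrix.mul_assoc]

omit [Fintype m] in
lemma IsLowerTriangular.isDiag {M : Matrix m m ℝ} (hl : M.IsLowerTriangular)
    (hu : M.IsUpperTriangular) : M.IsDiag := fun _ _ hij =>
  hij.lt_or_gt.elim (fun h => hl h) (fun h => hu h)

lemma IsLowerTriangular.isUnit_det {L : Matrix m m ℝ} (hL : L.IsLowerTriangular)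
    (hdiag : ∀ i, 0 < L i i) : IsUnit L.det := by
  rw [det_of_isLowerTriangular L hL]
  exact (Finset.prod_pos fun i _ => hdiag i).ne'.isUnit

lemma IsLowerTriangular.exists_pos_diag_transpose_mul_self_eq {L : Matrix m m ℝ}
    (hL : L.IsLowerTriangular) (hdet : IsUnit L.det) :
    ∃ L' : Matrix m m ℝ, L'.IsLowerTriangular ∧ (∀ i, 0 < L' i i) ∧ L'ᵀ * L' = Lᵀ * L := by
  have hdiag i : L i i ≠ 0 := by
    rw [det_of_isLowerTriangular L hL] at hdet
    exact Finset.prod_ne_zero_iff.mp hdet.ne_zero i (Finset.mem_univ i)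
  set ε : m → ℝ := fun i => SignType.sign (L i i)
  have hε : diagonal ε * diagonal ε = 1 := by
    rw [diagonal_mul_diagonal, ← diagonal_one]
    congr 1
    funext i
    rcases (hdiag i).lt_or_gt with h | h <;> simp [ε, h]
  refine ⟨diagonal ε * L, (blockTriangular_diagonal ε).mul hL, fun i => ?_, ?_⟩
  · rw [diagonal_mul, sign_mul_self]
    exact abs_pos.mpr (hdiag i)
  · rw [transpose_mul, diagonal_transpose, Matrix.mul_assoc, ← Matrix.mul_assoc (diagonal ε), hε,
      Matrix.one_mul]

lemma PosDef.exists_isLowerTriangular_pos_transpose_mul_self_eq [WellFoundedGT m]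
    [LocallyFiniteOrderTop m] {M : Matrix m m ℝ} (hM : M.PosDef) :
    ∃ L : Matrix m m ℝ, L.IsLowerTriangular ∧ (∀ i, 0 < L i i) ∧ Lᵀ * L = M := by
  -- the transpose of a lower-triangular factor for the reversed order `mᵒᵈ`
  obtain ⟨C, hC, hCM⟩ := PosDef.exists_isLowerTriangular_mul_transpose (m := mᵒᵈ)
    (hM.submatrix OrderDual.ofDual.injective)
  have hCt : (Cᵀ : Matrix m m ℝ).IsLowerTriangular := fun _ _ hij => hC hij
  have hdet : IsUnit (Cᵀ : Matrix m m ℝ).det := by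
    have : IsUnit (Cᵀᵀ * Cᵀ : Matrix m m ℝ).det := hCM ▸ hM.isUnit_det
    rw [det_mul, det_transpose] at this
    exact isUnit_of_mul_isUnit_left this
  obtain ⟨L, hL, hLpos, hLC⟩ := hCt.exists_pos_diag_transpose_mul_self_eq hdet
  exact ⟨L, hL, hLpos, hLC.trans hCM⟩

lemma IsLowerTriangular.eq_of_transpose_mul_self_eq {L₁ L₂ : Matrix m m ℝ}
    (hL₁ : L₁.IsLowerTriangular) (hL₂ : L₂.IsLowerTriangular)
    (hd₁ : ∀ i, 0 < L₁ i i) (hd₂ : ∀ i, 0 < L₂ i i) (h : L₁ᵀ * L₁ = L₂ᵀ * L₂) : L₁ = L₂ := by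
  have := L₁.invertibleOfIsUnitDet (hL₁.isUnit_det hd₁)
  have := L₂.invertibleOfIsUnitDet (hL₂.isUnit_det hd₂)
  set Z := L₂ * L₁⁻¹
  have hZl : Z.IsLowerTriangular := hL₂.mul (blockTriangular_inv_of_blockTriangular hL₁)
  have hZt : Zᵀ = L₁ * L₂⁻¹ := by
    rw [transpose_mul, transpose_nonsing_inv, inv_mul_eq_iff_eq_mul_of_invertible,
      ← Matrix.mul_assoc, h, Matrix.mul_assoc, mul_inv_of_invertible, Matrix.mul_one]
  have hZu : Z.IsUpperTriangular := by
    rw [← transpose_transpose Z, hZt]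
    exact (hL₁.mul (blockTriangular_inv_of_blockTriangular hL₂)).transpose
  have hZ : diagonal Z.diag = Z := (hZl.isDiag hZu).diagonal_diag
  have hZL : Z * L₁ = L₂ := by simp [Z, Matrix.mul_assoc]
  have hZZ : Zᵀ * Z = 1 := by simp [hZt, Z, Matrix.mul_assoc]
  have hz i : Z i i = 1 := by
    have hsq : Z i i * Z i i = 1 := by
      have := congrFun (congrFun hZZ i) i
      rw [← hZ] at this
      simpa [diagonal_transpose] using this
    have hpos : 0 < Z i i := by
      have := congrFun (congrFun hZL i) i
      rw [← hZ, diagonal_mul] at this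
      exact pos_of_mul_pos_left (this ▸ hd₂ i) (hd₁ i).le
    nlinarith
  rw [← hZL, ← hZ, show Z.diag = 1 from funext hz, diagonal_one', Matrix.one_mul]

lemma isMinOn_gramLoss_feasibleGram [WellFoundedGT m] [LocallyFiniteOrderTop m] {S H : Matrix m m ℝ}
    (hH : ∀ G : Matrix m m ℝ, IsUnit G.det → G.IsLowerTriangular → (∀ i, ∑ j, G j i ^ 2 ≤ 1) →
      ∑ i, ∑ j, (S * H⁻¹) i j ^ 2 ≤ ∑ i, ∑ j, (S * G⁻¹) i j ^ 2) :
    IsMinOn (gramLoss S) feasibleGram (Hᵀ * H) := by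
  refine isMinOn_iff.mpr fun A hA => ?_
  obtain ⟨G, hG, hGpos, rfl⟩ := hA.1.exists_isLowerTriangular_pos_transpose_mul_self_eq
  have hGdet := hG.isUnit_det hGpos
  simpa only [sum_sq_mul_inv_eq_gramLoss] using
    hH G hGdet hG ((transpose_mul_self_mem_feasibleGram_iff hGdet).mp hA)

end Cholesky

section Minimiser

lemma isCompact_setOf_forall_sum_sq_le {m n : Type*} [Fintype m] (c : ℝ) :
    IsCompact {M : Matrix m n ℝ | ∀ j, ∑ i, M i j ^ 2 ≤ c} := by
  have hclosed : IsClosed {M : Matrix m n ℝ | ∀ j, ∑ i, M i j ^ 2 ≤ c} := by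
    simp only [Set.ofPred_forall]
    exact isClosed_iInter fun j => isClosed_le (by fun_prop) continuous_const
  refine (isCompact_univ_pi fun _ => isCompact_univ_pi fun _ => isCompact_Icc (a := -√c) (b := √c))
    |>.of_isClosed_subset hclosed fun M hM i _ j _ => abs_le.mp (Real.abs_le_sqrt ?_)
  exact (Finset.single_le_sum (fun i _ => sq_nonneg (M i j)) (Finset.mem_univ i)).trans (hM j)

variable {m : Type*} [Fintype m] [DecidableEq m]

theorem exists_forall_sum_sq_mul_inv_le {S : Matrix m m ℝ} (hS : IsUnit S.det) :
    ∃ H : Matrix m m ℝ, IsUnit H.det ∧ (∀ i, ∑ j, H j i ^ 2 ≤ 1) ∧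
      ∀ G : Matrix m m ℝ, IsUnit G.det → (∀ i, ∑ j, G j i ^ 2 ≤ 1) →
        ∑ i, ∑ j, (S * H⁻¹) i j ^ 2 ≤ ∑ i, ∑ j, (S * G⁻¹) i j ^ 2 := by
  set F : Matrix m m ℝ → ℝ := fun K => ∑ i, ∑ j, (S * K) i j ^ 2
  have hF : Continuous F := by fun_prop
  -- pairs `(H, H⁻¹)` in the sublevel set of the value at `H = 1`; `H⁻¹ = S⁻¹ (S H⁻¹)` is bounded
  set T := {p : Matrix m m ℝ × Matrix m m ℝ |
    (∀ i, ∑ j, p.1 j i ^ 2 ≤ 1) ∧ p.1 * p.2 = 1 ∧ F p.2 ≤ F 1}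
  have hT : IsCompact T := by
    have hclosed : IsClosed T :=
      ((isCompact_setOf_forall_sum_sq_le 1).isClosed.preimage continuous_fst).inter
        ((isClosed_eq (by fun_prop) continuous_const).inter
          (isClosed_le (hF.comp continuous_snd) continuous_const))
    refine ((isCompact_setOf_forall_sum_sq_le 1).prod
      ((isCompact_setOf_forall_sum_sq_le (F 1)).image (by fun_prop : Continuous (S⁻¹ * ·))))
      |>.of_isClosed_subset hclosed ?_
    rintro ⟨H, K⟩ ⟨hH, -, hK⟩
    refine ⟨hH, S * K, fun j => ?_, by simp [← Matrix.mul_assoc, nonsing_inv_mul _ hS]⟩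
    exact (Finset.sum_le_sum fun i _ =>
      Finset.single_le_sum (fun j _ => sq_nonneg ((S * K) i j)) (Finset.mem_univ j)).trans hK
  have h1 : ((1 : Matrix m m ℝ), (1 : Matrix m m ℝ)) ∈ T := by
    refine ⟨fun i => ?_, Matrix.one_mul 1, le_rfl⟩
    simp [one_apply]
  obtain ⟨⟨H, K⟩, ⟨hH, hHK, hK⟩, hmin⟩ :=
    hT.exists_isMinOn ⟨_, h1⟩ (hF.comp continuous_snd).continuousOn
  refine ⟨H, isUnit_det_of_right_inverse hHK, hH, fun G hG hGcol => ?_⟩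
  rw [inv_eq_right_inv hHK]
  by_cases hGF : F G⁻¹ ≤ F 1
  · exact isMinOn_iff.mp hmin (G, G⁻¹) ⟨hGcol, mul_nonsing_inv G hG, hGF⟩
  · exact hK.trans (not_le.mp hGF).le

end Minimiser

end Matrix

theorem streaming_factorization_optimal_general (n : ℕ)
    (S : Matrix (Fin n) (Fin n) ℝ) (hS : IsUnit S.det) :
    (∃ H : Matrix (Fin n) (Fin n) ℝ,
      IsUnit H.det ∧ (∀ i : Fin n, ∑ j, (H j i) ^ 2 ≤ 1) ∧
      (∀ i j : Fin n, i < j → H i j = 0) ∧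
      (∀ G : Matrix (Fin n) (Fin n) ℝ, IsUnit G.det →
        (∀ i : Fin n, ∑ j, (G j i) ^ 2 ≤ 1) →
        ∑ i, ∑ j, ((S * H⁻¹) i j) ^ 2 ≤ ∑ i, ∑ j, ((S * G⁻¹) i j) ^ 2)) ∧
    (∃! H : Matrix (Fin n) (Fin n) ℝ,
      (IsUnit H.det ∧ (∀ i j : Fin n, i < j → H i j = 0) ∧
        (∀ i : Fin n, 0 < H i i) ∧ (∀ i : Fin n, ∑ j, (H j i) ^ 2 ≤ 1)) ∧
      (∀ G : Matrix (Fin n) (Fin n) ℝ, IsUnit G.det →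
        (∀ i j : Fin n, i < j → G i j = 0) →
        (∀ i : Fin n, ∑ j, (G j i) ^ 2 ≤ 1) →
        ∑ i, ∑ j, ((S * H⁻¹) i j) ^ 2 ≤ ∑ i, ∑ j, ((S * G⁻¹) i j) ^ 2)) := by
  obtain ⟨H₀, hH₀, hH₀col, hH₀min⟩ := exists_forall_sum_sq_mul_inv_le hS
  obtain ⟨L, hL, hLpos, hLH₀⟩ :=
    (posDef_transpose_mul_self hH₀).exists_isLowerTriangular_pos_transpose_mul_self_eq
  have hLdet := hL.isUnit_det hLpos
  have hLcol : ∀ i, ∑ j, L j i ^ 2 ≤ 1 := by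
    rwa [← transpose_mul_self_mem_feasibleGram_iff hLdet, hLH₀,
      transpose_mul_self_mem_feasibleGram_iff hH₀]
  have hLmin : ∀ G : Matrix (Fin n) (Fin n) ℝ, IsUnit G.det → (∀ i, ∑ j, G j i ^ 2 ≤ 1) →
      ∑ i, ∑ j, (S * L⁻¹) i j ^ 2 ≤ ∑ i, ∑ j, (S * G⁻¹) i j ^ 2 := by
    rwa [sum_sq_mul_inv_eq_gramLoss, hLH₀, ← sum_sq_mul_inv_eq_gramLoss]
  refine ⟨⟨L, hLdet, hLcol, hL, hLmin⟩,
    ⟨L, ⟨⟨hLdet, hL, hLpos, hLcol⟩, fun G hG _ => hLmin G hG⟩, ?_⟩⟩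
  rintro H ⟨⟨hH, hHl, hHpos, hHcol⟩, hHmin⟩
  have hGram : Hᵀ * H = Lᵀ * L :=
    ((strictConvexOn_gramLoss hS).subset (fun _ hA => hA.1) convex_feasibleGram).eq_of_isMinOn
      (isMinOn_gramLoss_feasibleGram hHmin)
      (isMinOn_gramLoss_feasibleGram fun G hG _ => hLmin G hG)
      ((transpose_mul_self_mem_feasibleGram_iff hH).mpr hHcol)
      ((transpose_mul_self_mem_feasibleGram_iff hLdet).mpr hLcol)
  exact IsLowerTriangular.eq_of_transpose_mul_self_eq hHl hL hHpos hLpos hGram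

/-- Corollary `streaming_achieves_same_loss`: (i) the infimum of
`‖S·H⁻¹‖_F²` over invertible `H` with all column ℓ2-norms at most 1 is
attained by a lower-triangular matrix (so the streaming constraint does not
change the optimal value); (ii) among invertible lower-triangular matrices
with strictly positive diagonal and column norms at most 1 there is exactly
one minimizer. -/
theorem streaming_factorization_optimal (n : ℕ) (hn : 1 ≤ n)
    (S : Matrix (Fin n) (Fin n) ℝ) (hS : IsUnit S.det) :
    (∃ H : Matrix (Fin n) (Fin n) ℝ,
      IsUnit H.det ∧ (∀ i : Fin n, ∑ j, (H j i) ^ 2 ≤ 1) ∧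
      (∀ i j : Fin n, i < j → H i j = 0) ∧
      (∀ G : Matrix (Fin n) (Fin n) ℝ, IsUnit G.det →
        (∀ i : Fin n, ∑ j, (G j i) ^ 2 ≤ 1) →
        ∑ i, ∑ j, ((S * H⁻¹) i j) ^ 2 ≤ ∑ i, ∑ j, ((S * G⁻¹) i j) ^ 2)) ∧
    (∃! H : Matrix (Fin n) (Fin n) ℝ,
      (IsUnit H.det ∧ (∀ i j : Fin n, i < j → H i j = 0) ∧
        (∀ i : Fin n, 0 < H i i) ∧ (∀ i : Fin n, ∑ j, (H j i) ^ 2 ≤ 1)) ∧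
      (∀ G : Matrix (Fin n) (Fin n) ℝ, IsUnit G.det →
        (∀ i j : Fin n, i < j → G i j = 0) →
        (∀ i : Fin n, ∑ j, (G j i) ^ 2 ≤ 1) →
        ∑ i, ∑ j, ((S * H⁻¹) i j) ^ 2 ≤ ∑ i, ∑ j, ((S * G⁻¹) i j) ^ 2)) :=
  streaming_factorization_optimal_general n S hS
end

section
/- Let n ≥ 1 and let S be an invertible n×n matrix with real entries, regarded as a complex matrix. Suppose X is an n×n complex Hermitian positive-definite matrix with all (real) diagonal entries at most 1 such that the (real) trace tr(SᴴS X⁻¹) satisfies tr(SᴴS X⁻¹) ≤ tr(SᴴS Y⁻¹) for every complex Hermitian positive-definite Y with all diagonal entries at most 1. Then all entries of X are real. -/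
open Matrix ComplexOrder

/-!
For `A = SᵀS` the map `Y ↦ tr(A Y⁻¹)` is strictly midpoint convex on positive definite matrices:
with `E = X⁻¹ + Y⁻¹` and `F = X⁻¹ - Y⁻¹` one has `4 (X + Y)⁻¹ = E - F E⁻¹ F`, so the midpoint
falls short of the average by `½ tr(A F E⁻¹ F) > 0` unless `X = Y`. Since `X` is Hermitian and
`A` is real symmetric, `Xᵀ = X̄` is positive definite, has the same diagonal and the same
objective value as `X`. If `Xᵀ ≠ X`, the real part `(X + Xᵀ) / 2` would be feasible with a strictly
smaller objective, so `X` is symmetric, and a symmetric Hermitian matrix is real.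
-/

namespace Matrix

variable {n 𝕜 : Type*} [RCLike 𝕜]

theorem IsHermitian.im_eq_zero_of_isSymm {X : Matrix n n 𝕜} (hH : X.IsHermitian) (hS : X.IsSymm)
    (i j : n) : RCLike.im (X i j) = 0 := by
  have h := hH.apply i j
  rw [hS.apply] at h
  exact RCLike.conj_eq_iff_im.mp h

variable [Fintype n]

theorem IsSymm.trace_mul_transpose {R : Type*} [CommSemiring R] {A : Matrix n n R} (hA : A.IsSymm)
    (Z : Matrix n n R) : (A * Zᵀ).trace = (A * Z).trace := by
  rw [← trace_transpose, transpose_mul, transpose_transpose, hA.eq, trace_mul_comm]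

variable [DecidableEq n]

theorem four_smul_inv_add {K : Type*} [CommRing K] {X Y : Matrix n n K}
    (hX : IsUnit X.det) (hY : IsUnit Y.det) (hXY : IsUnit (X + Y).det) :
    (4 : K) • (X + Y)⁻¹ = X⁻¹ + Y⁻¹ - (X⁻¹ - Y⁻¹) * (X⁻¹ + Y⁻¹)⁻¹ * (X⁻¹ - Y⁻¹) := by
  set c := X⁻¹
  set d := Y⁻¹
  set g := (c + d)⁻¹
  have hcXY : c * (X + Y) = (c + d) * Y := by
    rw [mul_add, add_mul, nonsing_inv_mul X hX, nonsing_inv_mul Y hY, add_comm]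
  have hE : IsUnit (c + d).det := by
    have h := congrArg det hcXY
    rw [det_mul, det_mul] at h
    exact isUnit_of_mul_isUnit_left (h ▸ (isUnit_nonsing_inv_det X hX).mul hXY)
  have hgl : g * (c + d) = 1 := nonsing_inv_mul _ hE
  have hgr : (c + d) * g = 1 := mul_nonsing_inv _ hE
  have hdgc : (X + Y)⁻¹ = d * g * c := by
    refine inv_eq_left_inv ?_
    rw [mul_assoc, hcXY, ← mul_assoc, mul_assoc d, hgl, mul_one, nonsing_inv_mul Y hY]
  have hswap : c * g * d = d * g * c := by
    have h1 : c * g * d = c - c * g * c := by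
      rw [eq_sub_iff_add_eq, mul_assoc, mul_assoc, ← mul_add, ← mul_add, add_comm d, hgl,
        mul_one]
    have h2 : d * g * c = c - c * g * c := by
      rw [eq_sub_iff_add_eq, ← add_mul, ← add_mul, add_comm, hgr, one_mul]
    rw [h1, h2]
  calc (4 : K) • (X + Y)⁻¹ = 2 • (c * g * d) + 2 • (d * g * c) := by
        rw [hdgc, hswap, ← add_smul, ← Nat.cast_smul_eq_nsmul K]
        norm_num
    _ = (c + d) * g * (c + d) - (c - d) * g * (c - d) := by noncomm_ring
    _ = c + d - (c - d) * g * (c - d) := by rw [hgr, one_mul]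

open scoped MatrixOrder in
theorem PosDef.trace_mul_conjTranspose_mul_mul_pos {A G : Matrix n n 𝕜} (hA : A.PosDef)
    (hG : G.PosDef) {F : Matrix n n 𝕜} (hF : F ≠ 0) : 0 < (A * (Fᴴ * G * F)).trace := by
  obtain ⟨B, rfl⟩ := CStarAlgebra.nonneg_iff_eq_star_mul_self.mp hA.posSemidef.nonneg
  obtain ⟨C, rfl⟩ := CStarAlgebra.nonneg_iff_eq_star_mul_self.mp hG.posSemidef.nonneg
  have hB : IsUnit B := isUnit_of_mul_isUnit_right hA.isUnit
  have hC : IsUnit C := isUnit_of_mul_isUnit_right hG.isUnit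
  have htrace : (star B * B * (Fᴴ * (star C * C) * F)).trace
      = ((C * F * star B)ᴴ * (C * F * star B)).trace := by
    rw [mul_assoc, trace_mul_comm]
    simp only [conjTranspose_mul, conjTranspose_conjTranspose, star_eq_conjTranspose, mul_assoc]
  have hK : C * F * star B ≠ 0 := by
    rwa [Ne, hB.star.mul_left_eq_zero, hC.mul_right_eq_zero]
  rw [htrace]
  exact (posSemidef_conjTranspose_mul_self _).trace_nonneg.lt_of_ne
    (Ne.symm (trace_conjTranspose_mul_self_eq_zero_iff.not.mpr hK))

theorem PosDef.trace_mul_inv_midpoint_lt {A X Y : Matrix n n 𝕜} (hA : A.PosDef) (hX : X.PosDef)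
    (hY : Y.PosDef) (hXY : X ≠ Y) :
    (A * ((2 : 𝕜)⁻¹ • (X + Y))⁻¹).trace < (2 : 𝕜)⁻¹ * ((A * X⁻¹).trace + (A * Y⁻¹).trace) := by
  have hdX := (isUnit_iff_isUnit_det X).mp hX.isUnit
  have hdY := (isUnit_iff_isUnit_det Y).mp hY.isUnit
  have hdXY := (isUnit_iff_isUnit_det _).mp (hX.add hY).isUnit
  set F := X⁻¹ - Y⁻¹
  have hF : F ≠ 0 := sub_ne_zero.mpr fun h ↦ hXY (inv_inj h hdX)
  have hFH : Fᴴ = F := by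
    rw [conjTranspose_sub, hX.inv.isHermitian.eq, hY.inv.isHermitian.eq]
  have hmid : ((2 : 𝕜)⁻¹ • (X + Y))⁻¹
      = (2 : 𝕜)⁻¹ • (X⁻¹ + Y⁻¹) - (2 : 𝕜)⁻¹ • (Fᴴ * (X⁻¹ + Y⁻¹)⁻¹ * F) := by
    have hhalf : ((2 : 𝕜)⁻¹ • (X + Y))⁻¹ = (2 : 𝕜) • (X + Y)⁻¹ := inv_eq_left_inv <| by
      rw [smul_mul_smul_comm, mul_inv_cancel₀ two_ne_zero, one_smul, nonsing_inv_mul _ hdXY]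
    rw [hhalf, hFH, ← smul_sub, ← four_smul_inv_add hdX hdY hdXY, smul_smul]
    norm_num
  have hgap := hA.trace_mul_conjTranspose_mul_mul_pos (hX.inv.add hY.inv).inv hF
  rw [hmid, mul_sub, Matrix.mul_smul, Matrix.mul_smul, trace_sub, trace_smul, trace_smul, mul_add,
    trace_add, smul_eq_mul, smul_eq_mul, sub_lt_self_iff]
  exact mul_pos (by norm_num) hgap

end Matrix

theorem optimal_X_is_real_general (n : ℕ)
    (S : Matrix (Fin n) (Fin n) ℝ) (hS : IsUnit S.det)
    (X : Matrix (Fin n) (Fin n) ℂ) (hX : X.PosDef)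
    (hdiag : ∀ i : Fin n, (X i i).re ≤ 1)
    (hmin : ∀ Y : Matrix (Fin n) (Fin n) ℂ, Y.PosDef →
      (∀ i : Fin n, (Y i i).re ≤ 1) →
      (Matrix.trace ((S.map Complex.ofReal)ᴴ * (S.map Complex.ofReal) * X⁻¹)).re ≤
        (Matrix.trace ((S.map Complex.ofReal)ᴴ * (S.map Complex.ofReal) * Y⁻¹)).re) :
    ∀ i j : Fin n, (X i j).im = 0 := by
  set T := S.map Complex.ofReal
  have hT : IsUnit T :=
    (isUnit_iff_isUnit_det T).mpr (RingHom.map_det Complex.ofRealHom S ▸ hS.map _)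
  have hA : (Tᴴ * T).PosDef := by
    simpa [star_eq_conjTranspose] using (hT.posDef_star_left_conjugate_iff (x := 1)).mpr PosDef.one
  have hAsymm : (Tᴴ * T).IsSymm := by
    have hTH : Tᴴ = Tᵀ := by ext; simp [T]
    rw [hTH]
    exact isSymm_transpose_mul_self T
  have hsymm : Xᵀ = X := by
    by_contra hne
    set M := (2 : ℂ)⁻¹ • (X + Xᵀ)
    have hM : M.PosDef := (hX.add hX.transpose).smul (by norm_num)
    have hMdiag (i : Fin n) : (M i i).re ≤ 1 := by
      have hMX : M i i = X i i := by
        simp only [M, Matrix.smul_apply, Matrix.add_apply, transpose_apply, smul_eq_mul]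
        ring
      exact hMX ▸ hdiag i
    have hlt := hA.trace_mul_inv_midpoint_lt hX hX.transpose (Ne.symm hne)
    rw [← transpose_nonsing_inv, hAsymm.trace_mul_transpose, ← two_mul,
      inv_mul_cancel_left₀ two_ne_zero] at hlt
    exact (hmin M hM hMdiag).not_gt (Complex.lt_def.mp hlt).1
  exact hX.isHermitian.im_eq_zero_of_isSymm hsymm

/-- Corollary `real_valued_solution`: for a real invertible `S` (viewed as a
complex matrix), any Hermitian positive-definite minimizer `X` of
`X ↦ tr(SᴴS X⁻¹)` over Hermitian positive-definite matrices with (real)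
diagonal entries at most 1 has all entries real. -/
theorem optimal_X_is_real (n : ℕ) (hn : 1 ≤ n)
    (S : Matrix (Fin n) (Fin n) ℝ) (hS : IsUnit S.det)
    (X : Matrix (Fin n) (Fin n) ℂ) (hX : X.PosDef)
    (hdiag : ∀ i : Fin n, (X i i).re ≤ 1)
    (hmin : ∀ Y : Matrix (Fin n) (Fin n) ℂ, Y.PosDef →
      (∀ i : Fin n, (Y i i).re ≤ 1) →
      (Matrix.trace ((S.map Complex.ofReal)ᴴ * (S.map Complex.ofReal) * X⁻¹)).re ≤
        (Matrix.trace ((S.map Complex.ofReal)ᴴ * (S.map Complex.ofReal) * Y⁻¹)).re) :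
    ∀ i j : Fin n, (X i j).im = 0 :=
  optimal_X_is_real_general n S hS X hX hdiag hmin
end

section
/- Let n ≥ 1 and let S be the n×n prefix-sum matrix with entries S_{ij} = 1 if j ≤ i and 0 otherwise. For each k ∈ {1,…,n} set μ_k = 1 / (4·sin²((2k−1)π/(4n+2))). Then each μ_k is an eigenvalue of SᵀS, i.e., det(SᵀS − μ_k·I) = 0 for every k ∈ {1,…,n}, and the values μ₁,…,μₙ are pairwise distinct (so the singular values of S are σ_k = 1/(2·sin((2k−1)π/(4n+2)))). -/
open Matrix Real

/-!
Index from `0`. With `φ = (2k + 1)π / (4n + 2)`, the vector `u j = cos ((2j + 1)φ)` is an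
eigenvector of `SᵀS`.
Both `S` and `Sᵀ` act by partial sums, and the product-to-sum formulas make them telescope:
`2 sin φ · Σ_{j ≤ i} cos ((2j + 1)φ) = sin (2(i + 1)φ)` and
`2 sin φ · Σ_{i ≥ j} sin (2(i + 1)φ) = cos ((2j + 1)φ) - cos ((2n + 1)φ)`.
The choice of `φ` makes `cos ((2n + 1)φ)` vanish, so `SᵀS u = u / (4 sin² φ)`.
The angles increase inside `(0, π/2)`, where `1 / (4 sin² x)` strictly decreases.
-/

open Finset

def prefixSumMatrix (R : Type*) [Zero R] [One R] (n : ℕ) : Matrix (Fin n) (Fin n) R :=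
  of fun i j => if j ≤ i then 1 else 0

section PrefixSum

variable {R : Type*} [Ring R] {n : ℕ}

theorem prefixSumMatrix_mulVec_apply (v : Fin n → R) (i : Fin n) :
    (prefixSumMatrix R n *ᵥ v) i = ∑ j ∈ Iic i, v j := by
  simp [prefixSumMatrix, mulVec, dotProduct, sum_ite, filter_ge_eq_Iic]

theorem transpose_prefixSumMatrix_mulVec_apply (v : Fin n → R) (j : Fin n) :
    ((prefixSumMatrix R n)ᵀ *ᵥ v) j = ∑ i ∈ Ici j, v i := by
  simp [prefixSumMatrix, mulVec, dotProduct, sum_ite, filter_le_eq_Ici]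

theorem prefixSumMatrix_mulVec_sub (f : ℕ → R) (i : Fin n) :
    (prefixSumMatrix R n *ᵥ fun j => f (j + 1) - f j) i = f (i + 1) - f 0 := by
  rw [prefixSumMatrix_mulVec_apply]
  have := sum_map (Iic i) Fin.valEmbedding fun m => f (m + 1) - f m
  rwa [Fin.map_valEmbedding_Iic, ← Nat.range_succ_eq_Iic, sum_range_sub, eq_comm] at this

theorem transpose_prefixSumMatrix_mulVec_sub (f : ℕ → R) (j : Fin n) :
    ((prefixSumMatrix R n)ᵀ *ᵥ fun i => f (i + 1) - f i) j = f n - f j := by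
  rw [transpose_prefixSumMatrix_mulVec_apply]
  have := sum_map (Ici j) Fin.valEmbedding fun m => f (m + 1) - f m
  rwa [Fin.map_valEmbedding_Ici, sum_Ico_sub _ j.is_lt.le, eq_comm] at this

end PrefixSum

section Trigonometry

variable (φ : ℝ)

theorem sin_two_mul_succ_mul_sub_sin (x : ℝ) :
    sin (2 * (x + 1) * φ) - sin (2 * x * φ) = 2 * sin φ * cos ((2 * x + 1) * φ) := by
  rw [sin_sub_sin]; ring_nf

theorem cos_odd_mul_sub_cos_odd_succ_mul (x : ℝ) :
    cos ((2 * x + 1) * φ) - cos ((2 * (x + 1) + 1) * φ) =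
      2 * sin φ * sin (2 * (x + 1) * φ) := by
  rw [cos_sub_cos]; ring_nf; rw [sin_neg]; ring

theorem strictAntiOn_one_div_four_mul_sin_sq :
    StrictAntiOn (fun x => 1 / (4 * sin x ^ 2)) (Set.Ioo 0 (π / 2)) := by
  intro x hx y hy hxy
  have hsin : sin x < sin y :=
    strictMonoOn_sin ⟨by linarith [hx.1, pi_pos], hx.2.le⟩
      ⟨by linarith [hy.1, pi_pos], hy.2.le⟩ hxy
  have hx_pos : 0 < sin x := sin_pos_of_pos_of_lt_pi hx.1 (by linarith [hx.2, pi_pos])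
  exact one_div_lt_one_div_of_lt (by positivity) (by gcongr)

end Trigonometry

noncomputable def oddCosVector (n : ℕ) (φ : ℝ) : Fin n → ℝ :=
  fun j => cos ((2 * (j : ℕ) + 1) * φ)

theorem oddCosVector_ne_zero {n : ℕ} {φ : ℝ} (hn : 0 < n) (hφ : cos φ ≠ 0) :
    oddCosVector n φ ≠ 0 := fun h =>
  hφ (by simpa [oddCosVector] using congr_fun h ⟨0, hn⟩)

theorem prefixSumMatrix_gram_mulVec_oddCosVector {n : ℕ} {φ : ℝ} (hφ : sin φ ≠ 0)
    (hn : cos ((2 * n + 1) * φ) = 0) :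
    ((prefixSumMatrix ℝ n)ᵀ * prefixSumMatrix ℝ n) *ᵥ oddCosVector n φ =
      (1 / (4 * sin φ ^ 2)) • oddCosVector n φ := by
  set f : ℕ → ℝ := fun m => sin (2 * m * φ) / (2 * sin φ)
  set g : ℕ → ℝ := fun m => -cos ((2 * m + 1) * φ) / (4 * sin φ ^ 2)
  have hu : oddCosVector n φ = fun j : Fin n => f (j + 1) - f j := by
    ext j
    simp only [oddCosVector, f, Nat.cast_add, Nat.cast_one, ← sub_div,
      sin_two_mul_succ_mul_sub_sin]
    field_simp
  have hSu : prefixSumMatrix ℝ n *ᵥ oddCosVector n φ = fun i : Fin n => g (i + 1) - g i := by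
    ext i
    rw [hu, prefixSumMatrix_mulVec_sub]
    simp only [f, g, Nat.cast_add, Nat.cast_one, Nat.cast_zero, mul_zero, zero_mul, sin_zero,
      zero_div, sub_zero]
    rw [div_sub_div_same, neg_sub_neg, cos_odd_mul_sub_cos_odd_succ_mul]
    field_simp
    ring
  ext j
  rw [← mulVec_mulVec, hSu, transpose_prefixSumMatrix_mulVec_sub]
  simp only [oddCosVector, g, hn, Pi.smul_apply, smul_eq_mul]
  ring

theorem Matrix.det_sub_smul_one_eq_zero_of_mulVec_eq_smul {ι K : Type*} [Fintype ι]
    [DecidableEq ι] [Field K] {A : Matrix ι ι K} {μ : K} {v : ι → K} (hv : v ≠ 0)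
    (hAv : A *ᵥ v = μ • v) : (A - μ • 1).det = 0 :=
  exists_mulVec_eq_zero_iff.mp
    ⟨v, hv, by rw [sub_mulVec, smul_mulVec, one_mulVec, hAv, sub_self]⟩

section Angles

variable {n k : ℕ}

theorem odd_mul_pi_div_mem_Ioo (hk : k < n) :
    (2 * k + 1) * π / (4 * n + 2) ∈ Set.Ioo 0 (π / 2) := by
  have hk' : (k : ℝ) + 1 ≤ n := by exact_mod_cast hk
  refine ⟨by positivity, ?_⟩
  rw [div_lt_div_iff₀ (by positivity) two_pos]
  nlinarith [pi_pos]

theorem cos_odd_mul_odd_mul_pi_div :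
    cos ((2 * n + 1) * ((2 * k + 1) * π / (4 * n + 2))) = 0 := by
  rw [cos_eq_zero_iff]
  exact ⟨k, by push_cast; field_simp; ring⟩

end Angles

theorem prefix_sum_gram_eigenvalues_general (n : ℕ)
    (S : Matrix (Fin n) (Fin n) ℝ)
    (hSdef : ∀ i j : Fin n, S i j = if j ≤ i then 1 else 0)
    (μ : Fin n → ℝ)
    (hμ : ∀ k : Fin n,
      μ k = 1 / (4 * Real.sin ((2 * ((k : ℕ) + 1) - 1) * Real.pi /
        (4 * n + 2)) ^ 2)) :
    (∀ k : Fin n, (Sᵀ * S - μ k • (1 : Matrix (Fin n) (Fin n) ℝ)).det = 0) ∧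
    Function.Injective μ := by
  set θ : Fin n → ℝ := fun k => (2 * (k : ℕ) + 1) * π / (4 * n + 2)
  have hθ : ∀ k, θ k ∈ Set.Ioo 0 (π / 2) := fun k => odd_mul_pi_div_mem_Ioo k.is_lt
  have hμθ : ∀ k, μ k = 1 / (4 * sin (θ k) ^ 2) := fun k => by
    rw [hμ]; congr 4; ring
  have hS : S = prefixSumMatrix ℝ n := ext fun i j => hSdef i j
  refine ⟨fun k => ?_, ?_⟩
  · have hsin : sin (θ k) ≠ 0 :=
      (sin_pos_of_pos_of_lt_pi (hθ k).1 (by linarith [(hθ k).2, pi_pos])).ne'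
    have hcos : cos (θ k) ≠ 0 :=
      (cos_pos_of_mem_Ioo ⟨by linarith [(hθ k).1, pi_pos], (hθ k).2⟩).ne'
    rw [hS, hμθ]
    exact det_sub_smul_one_eq_zero_of_mulVec_eq_smul (oddCosVector_ne_zero k.pos hcos)
      (prefixSumMatrix_gram_mulVec_oddCosVector hsin cos_odd_mul_odd_mul_pi_div)
  · have hθ_mono : StrictMono θ := fun k l hkl => by
      simp only [θ]; gcongr; exact_mod_cast hkl
    have hμ_anti : StrictAnti μ := fun k l hkl => by
      rw [hμθ, hμθ]
      exact strictAntiOn_one_div_four_mul_sin_sq (hθ k) (hθ l) (hθ_mono hkl)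
    exact hμ_anti.injective

/-- Proposition `prefix_sum_singular_values`: each
`μ_k = 1/(4 sin²((2k−1)π/(4n+2)))` (for `k = 1, …, n`, here `k = (k:Fin n)+1`)
is an eigenvalue of `SᵀS` for the prefix-sum matrix `S`, and these values are
pairwise distinct. -/
theorem prefix_sum_gram_eigenvalues (n : ℕ) (hn : 1 ≤ n)
    (S : Matrix (Fin n) (Fin n) ℝ)
    (hSdef : ∀ i j : Fin n, S i j = if j ≤ i then 1 else 0)
    (μ : Fin n → ℝ)
    (hμ : ∀ k : Fin n,
      μ k = 1 / (4 * Real.sin ((2 * ((k : ℕ) + 1) - 1) * Real.pi /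
        (4 * n + 2)) ^ 2)) :
    (∀ k : Fin n, (Sᵀ * S - μ k • (1 : Matrix (Fin n) (Fin n) ℝ)).det = 0) ∧
    Function.Injective μ :=
  prefix_sum_gram_eigenvalues_general n S hSdef μ hμ
end

section
/- For every natural number n ≥ 1, ∑_{j=1}^{⌊(n+1)/2⌋} 1 / (2·sin((4j−3)π/(4n+2))) ≥ (n/(2π))·log n, where log denotes the natural logarithm. (The left-hand side is the sum of the odd-indexed singular values σ_{2j−1} = 1/(2 sin((2(2j−1)−1)π/(4n+2))) of the n×n prefix-sum matrix.) -/
/-!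
Since `sin x ≤ x`, each term `1 / (2 sin ((4j-3)π/(4n+2)))` is at least `(2n+1) / (π (4j-3))`.
The sum of `1 / (4j-3)` over `j ≤ ⌊(n+1)/2⌋` is a harmonic sum along an arithmetic progression,
bounded below by `(1/4) log (4⌊(n+1)/2⌋ + 1) ≥ (1/4) log n` through `log (1 + t) ≤ t`.
-/

open Real Finset

theorem log_add_mul_sub_log_le_sum {a d : ℝ} (ha : 0 < a) (hd : 0 ≤ d) (m : ℕ) :
    log (a + m * d) - log a ≤ ∑ j ∈ range m, d / (a + j * d) := by
  induction m with
  | zero => simp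
  | succ m ih =>
    have hb : 0 < a + m * d := by positivity
    have hstep : log (a + m * d + d) - log (a + m * d) ≤ d / (a + m * d) := by
      rw [← log_div (by positivity) hb.ne']
      calc log ((a + m * d + d) / (a + m * d)) ≤ (a + m * d + d) / (a + m * d) - 1 :=
            log_le_sub_one_of_pos (by positivity)
        _ = d / (a + m * d) := by field_simp; ring
    rw [sum_range_succ]
    push_cast
    rw [show a + (m + 1) * d = a + m * d + d by ring]
    linarith

theorem log_four_mul_add_one_le_sum (m : ℕ) :
    log (4 * m + 1) ≤ ∑ j ∈ Icc 1 m, 4 / (4 * (j : ℝ) - 3) := by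
  have h := log_add_mul_sub_log_le_sum one_pos (by norm_num : (0 : ℝ) ≤ 4) m
  rw [log_one, sub_zero] at h
  rw [← Ico_add_one_right_eq_Icc, sum_Ico_eq_sum_range, Nat.add_sub_cancel]
  convert h using 2 with j
  · ring
  · push_cast; ring

theorem mul_four_div_le_one_div_two_mul_sin {n j : ℕ} (hj : 1 ≤ j) (hjn : 2 * j ≤ n + 1) :
    (2 * n + 1) / (4 * π) * (4 / (4 * (j : ℝ) - 3)) ≤
      1 / (2 * sin ((4 * (j : ℝ) - 3) * π / (4 * n + 2))) := by
  have hj' : (1 : ℝ) ≤ j := by exact_mod_cast hj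
  have hjn' : 2 * (j : ℝ) ≤ n + 1 := by exact_mod_cast hjn
  set x := (4 * (j : ℝ) - 3) * π / (4 * n + 2)
  have hx0 : 0 < x := div_pos (mul_pos (by linarith) pi_pos) (by positivity)
  have hxπ : x < π := by
    rw [div_lt_iff₀ (by positivity)]
    nlinarith [pi_pos]
  have hsin : 1 / (2 * x) ≤ 1 / (2 * sin x) :=
    one_div_le_one_div_of_le (by linarith [sin_pos_of_pos_of_lt_pi hx0 hxπ])
      (by linarith [sin_le hx0.le])
  convert hsin using 1
  have hπ := pi_pos
  simp only [x]
  field_simp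
  ring

theorem odd_singular_values_sum_lower_bound_general (n : ℕ) :
    (n / (2 * Real.pi)) * Real.log n ≤
      ∑ j ∈ Finset.Icc 1 ((n + 1) / 2),
        1 / (2 * Real.sin ((4 * (j : ℝ) - 3) * Real.pi / (4 * n + 2))) := by
  set m := (n + 1) / 2
  have hlog_n : log n ≤ log (4 * m + 1) := by
    rcases n.eq_zero_or_pos with rfl | hn
    · simp only [Nat.cast_zero, log_zero]; positivity
    · exact log_le_log (by positivity) (by norm_cast; omega)
  have hπ := pi_pos
  calc (n / (2 * π)) * log n ≤ (2 * n + 1) / (4 * π) * log (4 * m + 1) := by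
        rw [show (n : ℝ) / (2 * π) = 2 * n / (4 * π) by field_simp; ring]
        gcongr
        linarith
    _ ≤ (2 * n + 1) / (4 * π) * ∑ j ∈ Icc 1 m, 4 / (4 * (j : ℝ) - 3) := by
        gcongr
        exact log_four_mul_add_one_le_sum m
    _ ≤ _ := by
        rw [mul_sum]
        refine sum_le_sum fun j hj => ?_
        rw [mem_Icc] at hj
        exact mul_four_div_le_one_div_two_mul_sin hj.1 (by omega)

/-- Proposition `prefix_sum_singular_values`, summed form: for every `n ≥ 1`,
`∑_{j=1}^{⌊(n+1)/2⌋} 1/(2 sin((4j−3)π/(4n+2))) ≥ (n/(2π)) log n`. -/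
theorem odd_singular_values_sum_lower_bound (n : ℕ) (hn : 1 ≤ n) :
    (n / (2 * Real.pi)) * Real.log n ≤
      ∑ j ∈ Finset.Icc 1 ((n + 1) / 2),
        1 / (2 * Real.sin ((4 * (j : ℝ) - 3) * Real.pi / (4 * n + 2))) :=
  odd_singular_values_sum_lower_bound_general n
end
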